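/- Let SF = (A,R) be a SETAF, let E ∈ adm(SF), and let S ∈ SCCs(SF). Let E' ⊆ A be a set of arguments such that (E ∩ S) ⊆ E' ⊆ U_SF(S,E) and E' ∈ adm(SF↓_{UP_SF(S,E)}^{(E∖S)⁺_R}, U_SF(S,E), M_SF(S,E)). Then E ∪ E' ∈ adm(SF). -/

import Mathlib

/-- A SETAF: a finite set of arguments `A` together with an attack relation `R`
    whose elements are pairs `(T, h)` with nonempty tail `T ⊆ A` and head `h ∈ A`. -/
structure SETAF (α : Type*) where
  A : Set α
  R : Set (Set α × α)
  finA : A.Finite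
  tail_nonempty : ∀ r ∈ R, (r.1 : Set α).Nonempty
  tail_subset : ∀ r ∈ R, r.1 ⊆ A
  head_mem : ∀ r ∈ R, r.2 ∈ A

namespace SETAF

variable {α : Type*}

/-- `S ↦_R a` : the set `S` attacks the argument `a`. -/
def attacksArg (SF : SETAF α) (S : Set α) (a : α) : Prop :=
  ∃ T, T ⊆ S ∧ (T, a) ∈ SF.R

/-- `S ↦_R S'` : the set `S` attacks the set `S'`. -/
def attacksSet (SF : SETAF α) (S S' : Set α) : Prop :=
  ∃ a ∈ S', SF.attacksArg S a

/-- `S⁺_R`. -/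
def plus (SF : SETAF α) (S : Set α) : Set α := {a | SF.attacksArg S a}

/-- The range `S⊕_R = S ∪ S⁺_R`. -/
def range (SF : SETAF α) (S : Set α) : Set α := S ∪ SF.plus S

/-- Conflict-free sets. -/
def cf (SF : SETAF α) : Set (Set α) :=
  {S | S ⊆ SF.A ∧ ∀ r ∈ SF.R, ¬ (r.1 ∪ {r.2} ⊆ S)}

/-- `S` defends `a` : every attacker-set of `a` is counter-attacked by `S`. -/
def defends (SF : SETAF α) (S : Set α) (a : α) : Prop :=
  ∀ B ⊆ SF.A, SF.attacksArg B a → SF.attacksSet S B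

/-- Admissible sets. -/
def adm (SF : SETAF α) : Set (Set α) :=
  {S | S ∈ SF.cf ∧ ∀ a ∈ S, SF.defends S a}

/-- Complete extensions. -/
def com (SF : SETAF α) : Set (Set α) :=
  {S | S ∈ SF.adm ∧ ∀ a ∈ SF.A, SF.defends S a → a ∈ S}

/-- Stable extensions. -/
def stb (SF : SETAF α) : Set (Set α) :=
  {S | S ∈ SF.cf ∧ ∀ a ∈ SF.A \ S, SF.attacksArg S a}

/-- Preferred extensions. -/
def pref (SF : SETAF α) : Set (Set α) :=
  {S | S ∈ SF.adm ∧ ¬ ∃ T ∈ SF.adm, S ⊂ T}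

/-- Semi-stable extensions. -/
def sem (SF : SETAF α) : Set (Set α) :=
  {S | S ∈ SF.adm ∧ ¬ ∃ T ∈ SF.adm, SF.range S ⊂ SF.range T}

/-- The `E`-reduct `SF^E` of a SETAF. -/
def reduct (SF : SETAF α) (E : Set α) : SETAF α where
  A := SF.A \ SF.range E
  R := {r | ∃ T h, (T, h) ∈ SF.R ∧ T ∩ SF.plus E = ∅ ∧ ¬ T ⊆ E ∧
        h ∈ SF.A \ SF.range E ∧ r = (T \ E, h)}
  finA := SF.finA.subset Set.sdiff_subset
  tail_nonempty := by
    rintro r ⟨T, h, hR, hTE, hTsub, hh, rfl⟩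
    exact Set.diff_nonempty.mpr hTsub
  tail_subset := by
    rintro r ⟨T, h, hR, hTE, hTsub, hh, rfl⟩
    rintro t ⟨htT, htE⟩
    refine ⟨SF.tail_subset (T, h) hR htT, ?_⟩
    rintro (hE | hplus)
    · exact htE hE
    · exact Set.eq_empty_iff_forall_notMem.mp hTE t ⟨htT, hplus⟩
  head_mem := by
    rintro r ⟨T, h, hR, hTE, hTsub, hh, rfl⟩
    exact hh

/-- The restriction `SF↓_S^D` of a SETAF w.r.t. a set `S` and a set `D` of
    deleted (defeated) arguments. -/
def restrict (SF : SETAF α) (D S : Set α) : SETAF α where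
  A := (SF.A ∩ S) \ D
  R := {r | ∃ T h, (T, h) ∈ SF.R ∧ h ∈ (SF.A ∩ S) \ D ∧ T ∩ D = ∅ ∧
        (T ∩ ((SF.A ∩ S) \ D)).Nonempty ∧ r = (T ∩ ((SF.A ∩ S) \ D), h)}
  finA := SF.finA.subset (fun a ha => ha.1.1)
  tail_nonempty := by
    rintro r ⟨T, h, _, _, _, hne, rfl⟩
    exact hne
  tail_subset := by
    rintro r ⟨T, h, _, _, _, _, rfl⟩
    exact Set.inter_subset_right
  head_mem := by
    rintro r ⟨T, h, _, hh, _, _, rfl⟩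
    exact hh

/-- Edge of the primal graph of a SETAF. -/
def primalEdge (SF : SETAF α) (t h : α) : Prop := ∃ T, (T, h) ∈ SF.R ∧ t ∈ T

/-- `a` influences `b` : there is a directed path from `a` to `b` in the primal graph. -/
def influences (SF : SETAF α) : α → α → Prop := Relation.ReflTransGen SF.primalEdge

/-- The strongly connected component of an argument in the primal graph. -/
def scc (SF : SETAF α) (a : α) : Set α :=
  {b | SF.influences a b ∧ SF.influences b a}

/-- The strongly connected components of (the primal graph of) a SETAF. -/
def SCCs (SF : SETAF α) : Set (Set α) :=
  {S | ∃ a ∈ SF.A, S = SF.scc a}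

/-- Defeated arguments of an SCC `S` w.r.t. `E`. -/
def Dscc (SF : SETAF α) (S E : Set α) : Set α :=
  {a ∈ S | SF.attacksArg (E \ S) a}

/-- Provisionally defeated arguments of an SCC `S` w.r.t. `E`. -/
def Pscc (SF : SETAF α) (S E : Set α) : Set α :=
  {a ∈ S | SF.attacksArg (SF.A \ (S ∪ SF.plus E)) a} \ SF.Dscc S E

/-- Undefeated arguments of an SCC `S` w.r.t. `E`. -/
def Uscc (SF : SETAF α) (S E : Set α) : Set α :=
  S \ (SF.Dscc S E ∪ SF.Pscc S E)

/-- `UP_SF(S,E) = U_SF(S,E) ∪ P_SF(S,E)`. -/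
def UPscc (SF : SETAF α) (S E : Set α) : Set α :=
  SF.Uscc S E ∪ SF.Pscc S E

/-- The mitigated attacks `M_SF(S,E)`. -/
def Mscc (SF : SETAF α) (S E : Set α) : Set (Set α × α) :=
  {r ∈ (SF.restrict (SF.plus (E \ S)) (SF.UPscc S E)).R |
    ∀ T', (T', r.2) ∈ SF.R → r.1 ⊆ T' → ¬ T' \ r.1 ⊆ E}

/-- `a` is acceptable considering `M` w.r.t. `E` (in the given SETAF). -/
def acceptableM (SF : SETAF α) (M : Set (Set α × α)) (E : Set α) (a : α) : Prop :=
  ∀ T, (T, a) ∈ SF.R → ∃ X t, (X, t) ∈ SF.R ∧ (X, t) ∉ M ∧ X ⊆ E ∧ t ∈ T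

/-- `adm(SF, C, M)` : admissible in `C` considering `M`. -/
def admCM (SF : SETAF α) (C : Set α) (M : Set (Set α × α)) : Set (Set α) :=
  {E | E ⊆ C ∧ E ∈ SF.cf ∧ ∀ a ∈ E, SF.acceptableM M E a}

/-- `com(SF, C, M)` : complete in `C` considering `M`. -/
def comCM (SF : SETAF α) (C : Set α) (M : Set (Set α × α)) : Set (Set α) :=
  {E | E ∈ SF.admCM C M ∧ ∀ a ∈ C, SF.acceptableM M E a → a ∈ E}

/-- `pref(SF, C, M)` : preferred in `C` considering `M`. -/
def prefCM (SF : SETAF α) (C : Set α) (M : Set (Set α × α)) : Set (Set α) :=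
  {E | E ∈ SF.admCM C M ∧ ¬ ∃ E' ∈ SF.admCM C M, E ⊂ E'}

/-- The characteristic function `F^M_{SF,C}` of `SF` in `C` considering `M`. -/
def charF (SF : SETAF α) (C : Set α) (M : Set (Set α × α)) (E : Set α) : Set α :=
  {a ∈ C | SF.acceptableM M E a}

/-- The empty SETAF `(∅, ∅)`. -/
def emptySETAF (α : Type*) : SETAF α where
  A := ∅
  R := ∅
  finA := Set.finite_empty
  tail_nonempty := by simp
  tail_subset := by simp
  head_mem := by simp

end SETAF

/-! The arguments of `E'` are undefeated in `S`, so every attack on them from outside `S` comes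
from arguments that `E` already attacks. An attack whose tail meets `S` survives, shrunk, in the
restriction `SF↓_{UP}^{(E∖S)⁺}`, where `E'` is conflict-free; so `E ∪ E'` is conflict-free.
If `E'` counters that restricted attack by a non-mitigated attack `(X, y)`, some original attack
`(T', y)` has `X ⊆ T'` and `T' ∖ X ⊆ E`, so `E ∪ E'` counters the original attack. -/

namespace SETAF

variable {α : Type*} {SF : SETAF α}

theorem attacksArg.mono {S S' : Set α} {a : α} (h : SF.attacksArg S a) (hS : S ⊆ S') :
    SF.attacksArg S' a :=
  let ⟨T, hTS, hR⟩ := h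
  ⟨T, hTS.trans hS, hR⟩

theorem plus_mono {S S' : Set α} (hS : S ⊆ S') : SF.plus S ⊆ SF.plus S' :=
  fun _ ha => attacksArg.mono ha hS

theorem defends.mono {S S' : Set α} {a : α} (h : SF.defends S a) (hS : S ⊆ S') :
    SF.defends S' a := by
  intro B hBA hB
  obtain ⟨b, hbB, hb⟩ := h B hBA hB
  exact ⟨b, hbB, hb.mono hS⟩

theorem not_attacksArg_of_mem_cf {E : Set α} (hE : E ∈ SF.cf) {x : α} (hx : x ∈ E) :
    ¬ SF.attacksArg E x := by
  rintro ⟨T, hTE, hR⟩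
  exact hE.2 (T, x) hR (Set.union_subset hTE (Set.singleton_subset_iff.2 hx))

theorem mem_restrict_R {D S T : Set α} {h : α} (hR : (T, h) ∈ SF.R)
    (hh : h ∈ (SF.restrict D S).A) (hTD : Disjoint T D)
    (hne : (T ∩ (SF.restrict D S).A).Nonempty) :
    (T ∩ (SF.restrict D S).A, h) ∈ (SF.restrict D S).R :=
  ⟨T, h, hR, hh, hTD.inter_eq, hne, rfl⟩

section SCC

variable {S E : Set α}

theorem UPscc_subset : SF.UPscc S E ⊆ S := by
  rintro a (ha | ha)
  · exact ha.1
  · exact ha.1.1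

theorem mem_UPscc_of_notMem_plus {t : α} (htS : t ∈ S) (ht : t ∉ SF.plus (E \ S)) :
    t ∈ SF.UPscc S E := by
  by_cases hP : t ∈ SF.Pscc S E
  · exact Or.inr hP
  · exact Or.inl ⟨htS, fun hDP => hDP.elim (fun hD => ht hD.2) hP⟩

theorem notMem_plus_of_mem_Uscc {a : α} (ha : a ∈ SF.Uscc S E) : a ∉ SF.plus (E \ S) :=
  fun hD => ha.2 (Or.inl ⟨ha.1, hD⟩)

theorem exists_mem_tail_of_mem_Uscc {a : α} {T : Set α} (ha : a ∈ SF.Uscc S E)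
    (hR : (T, a) ∈ SF.R) : ∃ t ∈ T, t ∈ S ∪ SF.plus E := by
  by_contra! hT
  refine ha.2 (Or.inr ⟨⟨ha.1, T, fun t ht => ⟨SF.tail_subset _ hR ht, hT t ht⟩, hR⟩, ?_⟩)
  exact fun hD => ha.2 (Or.inl hD)

theorem exists_superset_of_notMem_Mscc {X : Set α} {y : α}
    (hR : (X, y) ∈ (SF.restrict (SF.plus (E \ S)) (SF.UPscc S E)).R)
    (hM : (X, y) ∉ SF.Mscc S E) : ∃ T', (T', y) ∈ SF.R ∧ X ⊆ T' ∧ T' \ X ⊆ E := by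
  by_contra! h
  exact hM ⟨hR, h⟩

end SCC

section Extension

variable {S E E' : Set α}

theorem disjoint_tail_of_attacks_local (hE : E ∈ SF.cf) (h1 : E ∩ S ⊆ E')
    (hE'U : E' ⊆ SF.Uscc S E)
    (hE'cf : E' ∈ (SF.restrict (SF.plus (E \ S)) (SF.UPscc S E)).cf)
    {T : Set α} {h : α} (hR : (T, h) ∈ SF.R) (hT : T ⊆ E ∪ E') (hh : h ∈ E') :
    Disjoint T S := by
  refine Set.disjoint_left.2 fun t htT htS => ?_
  have hTS : T ∩ S ⊆ E' := fun u ⟨huT, huS⟩ => (hT huT).elim (fun huE => h1 ⟨huE, huS⟩) id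
  have hTD : Disjoint T (SF.plus (E \ S)) := Set.disjoint_left.2 fun u hu =>
    (hT hu).elim (fun huE hD => not_attacksArg_of_mem_cf hE huE (hD.mono Set.sdiff_subset))
      (fun huE' => notMem_plus_of_mem_Uscc (hE'U huE'))
  have hr := mem_restrict_R hR (hE'cf.1 hh) hTD ⟨t, htT, hE'cf.1 (hTS ⟨htT, htS⟩)⟩
  refine hE'cf.2 _ hr (Set.union_subset ?_ (Set.singleton_subset_iff.2 hh))
  exact fun u ⟨huT, huC⟩ => hTS ⟨huT, UPscc_subset huC.1.2⟩

theorem not_attacksArg_of_mem_union (hE : E ∈ SF.cf) (h1 : E ∩ S ⊆ E')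
    (hE'U : E' ⊆ SF.Uscc S E)
    (hE'cf : E' ∈ (SF.restrict (SF.plus (E \ S)) (SF.UPscc S E)).cf)
    {x : α} (hx : x ∈ E ∪ E') : ¬ SF.attacksArg E x := by
  rintro ⟨T, hTE, hR⟩
  rcases hx with hx | hx
  · exact not_attacksArg_of_mem_cf hE hx ⟨T, hTE, hR⟩
  · obtain ⟨t, htT, htS⟩ : ∃ t ∈ T, t ∈ S := by
      by_contra! hT
      exact notMem_plus_of_mem_Uscc (hE'U hx) ⟨T, fun t ht => ⟨hTE ht, hT t ht⟩, hR⟩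
    have hdisj := disjoint_tail_of_attacks_local hE h1 hE'U hE'cf hR
      (hTE.trans Set.subset_union_left) hx
    exact Set.disjoint_left.1 hdisj htT htS

theorem union_mem_cf (hE : E ∈ SF.adm) (h1 : E ∩ S ⊆ E') (hE'U : E' ⊆ SF.Uscc S E)
    (hE'cf : E' ∈ (SF.restrict (SF.plus (E \ S)) (SF.UPscc S E)).cf) :
    E ∪ E' ∈ SF.cf := by
  refine ⟨Set.union_subset hE.1.1 fun x hx => (hE'cf.1 hx).1.1, ?_⟩
  rintro ⟨T, h⟩ hR hsub
  have hT : T ⊆ E ∪ E' := Set.subset_union_left.trans hsub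
  have hattacked : ∀ x ∈ E ∪ E', ¬ SF.attacksArg E x :=
    fun _ hx => not_attacksArg_of_mem_union hE.1 h1 hE'U hE'cf hx
  rcases hsub (Or.inr rfl) with hh | hh
  · obtain ⟨y, hyT, hy⟩ := hE.2 h hh T (SF.tail_subset _ hR) ⟨T, subset_rfl, hR⟩
    exact hattacked y (hT hyT) hy
  · obtain ⟨t, htT, htS | htE⟩ := exists_mem_tail_of_mem_Uscc (hE'U hh) hR
    · exact Set.disjoint_left.1 (disjoint_tail_of_attacks_local hE.1 h1 hE'U hE'cf hR hT hh)
        htT htS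
    · exact hattacked t (hT htT) htE

theorem defends_union_of_mem_local (hE'U : E' ⊆ SF.Uscc S E)
    (hE'A : E' ⊆ (SF.restrict (SF.plus (E \ S)) (SF.UPscc S E)).A)
    (hacc : ∀ a ∈ E', (SF.restrict (SF.plus (E \ S)) (SF.UPscc S E)).acceptableM
      (SF.Mscc S E) E' a)
    {a : α} (ha : a ∈ E') : SF.defends (E ∪ E') a := by
  rintro B - ⟨T, hTB, hR⟩
  by_cases hTE : ∃ t ∈ T, t ∈ SF.plus E
  · obtain ⟨t, htT, htE⟩ := hTE
    exact ⟨t, hTB htT, htE.mono Set.subset_union_left⟩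
  push Not at hTE
  obtain ⟨t, htT, htS⟩ := exists_mem_tail_of_mem_Uscc (hE'U ha) hR
  replace htS := htS.resolve_right (hTE t htT)
  have hTD : Disjoint T (SF.plus (E \ S)) :=
    Set.disjoint_left.2 fun u hu hD => hTE u hu (plus_mono Set.sdiff_subset hD)
  have htD := Set.disjoint_left.1 hTD htT
  have hr := mem_restrict_R hR (hE'A ha) hTD
    ⟨t, htT, ⟨SF.tail_subset _ hR htT, mem_UPscc_of_notMem_plus htS htD⟩, htD⟩
  obtain ⟨X, y, hXR, hXM, hXE', hyT⟩ := hacc a ha _ hr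
  obtain ⟨T', hT'R, -, hT'E⟩ := exists_superset_of_notMem_Mscc hXR hXM
  refine ⟨y, hTB hyT.1, T', ?_, hT'R⟩
  rw [Set.sdiff_subset_iff] at hT'E
  exact hT'E.trans (Set.union_subset (hXE'.trans Set.subset_union_right) Set.subset_union_left)

end Extension

end SETAF

theorem stmt19_general {α : Type*} (SF : SETAF α) (E : Set α) (hE : E ∈ SF.adm)
    (S : Set α)
    (E' : Set α)
    (h1 : E ∩ S ⊆ E')
    (h3 : E' ∈ (SF.restrict (SF.plus (E \ S)) (SF.UPscc S E)).admCM
      (SF.Uscc S E) (SF.Mscc S E)) :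
    E ∪ E' ∈ SF.adm := by
  obtain ⟨hE'U, hE'cf, hE'acc⟩ := h3
  refine ⟨SETAF.union_mem_cf hE h1 hE'U hE'cf, ?_⟩
  rintro a (ha | ha)
  · exact (hE.2 a ha).mono Set.subset_union_left
  · exact SETAF.defends_union_of_mem_local hE'U hE'cf.1 hE'acc ha

/-- Lemma 6: extending an admissible set `E` by a locally admissible set `E'`
    of an SCC `S` yields an admissible set `E ∪ E'` of `SF`. -/
theorem stmt19 {α : Type*} (SF : SETAF α) (E : Set α) (hE : E ∈ SF.adm)
    (S : Set α) (hS : S ∈ SF.SCCs)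
    (E' : Set α) (hE' : E' ⊆ SF.A)
    (h1 : E ∩ S ⊆ E') (h2 : E' ⊆ SF.Uscc S E)
    (h3 : E' ∈ (SF.restrict (SF.plus (E \ S)) (SF.UPscc S E)).admCM
      (SF.Uscc S E) (SF.Mscc S E)) :
    E ∪ E' ∈ SF.adm :=
  stmt19_general SF E hE S E' h1 h3
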